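/- Let n ≥ 0 and consider the domain rev-n with facts 𝓕 = {f_0, …, f_n} and actions 𝓐 consisting of del-all = ⟨𝓕, ∅, 𝓕⟩, add-f_0 = ⟨∅, {f_0}, ∅⟩, and add-f_k = ⟨{f_{k−1}}, {f_k}, ∅⟩ for 1 ≤ k ≤ n. Then for every 0 ≤ k ≤ n, the action add-f_k is not universally uniformly reversible. -/

import Mathlib

/-- A STRIPS action over a type `F` of facts: a triple ⟨pre, add, del⟩ of sets of
facts with `add ∩ del = ∅` and `pre ∩ add = ∅`. States are subsets of `F`. -/
structure PlanAct (F : Type) where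
  pre : Set F
  add : Set F
  del : Set F
  add_del : add ∩ del = ∅
  pre_add : pre ∩ add = ∅

/-- Result of applying action `a` to state `s` (meaningful when `a.pre ⊆ s`). -/
def PlanAct.apply {F : Type} (a : PlanAct F) (s : Set F) : Set F :=
  (s \ a.del) ∪ a.add

/-- A sequence of actions is applicable in a state if each action is applicable
in the successively produced states. -/
def SeqApplicable {F : Type} : List (PlanAct F) → Set F → Prop
  | [], _ => True
  | a :: π, s => a.pre ⊆ s ∧ SeqApplicable π (a.apply s)

/-- Result of applying a sequence of actions to a state. -/
def SeqApply {F : Type} : List (PlanAct F) → Set F → Set F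
  | [], s => s
  | a :: π, s => SeqApply π (a.apply s)

/-- `π` is an `S`-reverse plan for `a` (w.r.t. the action set `𝓐`): all actions of
`π` are from `𝓐` and, for every `s ∈ S` in which `a` is applicable, `π` is
applicable in `a[s]` and `π[a[s]] = s`. With `S = Set.univ` this is a universal
reverse plan. -/
def IsRevPlan {F : Type} (𝓐 : Set (PlanAct F)) (S : Set (Set F)) (a : PlanAct F)
    (π : List (PlanAct F)) : Prop :=
  (∀ b ∈ π, b ∈ 𝓐) ∧
    ∀ s ∈ S, a.pre ⊆ s → SeqApplicable π (a.apply s) ∧ SeqApply π (a.apply s) = s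

/-- `a` is uniformly `S`-reversible: some `S`-reverse plan for `a` exists.
With `S = Set.univ` this is universal uniform reversibility. -/
def UniformlyReversible {F : Type} (𝓐 : Set (PlanAct F)) (S : Set (Set F))
    (a : PlanAct F) : Prop :=
  ∃ π, IsRevPlan 𝓐 S a π

/-- `s'` is reachable from `s` via actions from `𝓐`. -/
def Reachable {F : Type} (𝓐 : Set (PlanAct F)) (s s' : Set F) : Prop :=
  ∃ π : List (PlanAct F), (∀ b ∈ π, b ∈ 𝓐) ∧ SeqApplicable π s ∧ SeqApply π s = s'

/-- The action del-all = ⟨𝓕, ∅, 𝓕⟩ of the domain rev-n, 𝓕 = {f_0, …, f_n}. -/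
def delAll (n : ℕ) : PlanAct (Fin (n + 1)) where
  pre := Set.univ
  add := ∅
  del := Set.univ
  add_del := by simp
  pre_add := by simp

/-- The action add-f_k of the domain rev-n: precondition ∅ for k = 0 and
{f_{k-1}} for k ≥ 1, add effect {f_k}, no delete effects. -/
def addFk (n : ℕ) (k : Fin (n + 1)) : PlanAct (Fin (n + 1)) where
  pre := {j | (j : ℕ) + 1 = (k : ℕ)}
  add := {k}
  del := ∅
  add_del := by simp
  pre_add := by
    ext j
    simp only [Set.mem_inter_iff, Set.mem_setOf_eq, Set.mem_singleton_iff,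
      Set.mem_empty_iff_false, iff_false, not_and]
    rintro h rfl
    omega

/-- The action set 𝓐 of the domain rev-n. -/
def revActs (n : ℕ) : Set (PlanAct (Fin (n + 1))) :=
  insert (delAll n) (Set.range (addFk n))

/-- The sequence ⟨add-f_0, add-f_1, …, add-f_n⟩. -/
def revPlanSeq (n : ℕ) : List (PlanAct (Fin (n + 1))) :=
  (List.finRange (n + 1)).map (addFk n)

lemma seqApply_append {F : Type} (l₁ l₂ : List (PlanAct F)) (s : Set F) :
    SeqApply (l₁ ++ l₂) s = SeqApply l₂ (SeqApply l₁ s) := by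
  induction l₁ generalizing s with
  | nil => rfl
  | cons a t ih => simp [SeqApply, ih]

lemma seqApply_mono {F : Type} (π : List (PlanAct F)) (h : ∀ b ∈ π, b.del = ∅)
    (s : Set F) : s ⊆ SeqApply π s := by
  induction π generalizing s with
  | nil => exact subset_rfl
  | cons a t ih =>
    intro x hx
    apply ih (fun b hb => h b (List.mem_cons_of_mem a hb)) (a.apply s)
    exact Or.inl ⟨hx, by simp [h a List.mem_cons_self]⟩

theorem stmt17 (n : ℕ) (k : Fin (n + 1)) :
    ¬ UniformlyReversible (revActs n) Set.univ (addFk n k) := by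
  rintro ⟨π, hmem, hrev⟩
  have hknp : k ∉ (addFk n k).pre := by
    simp [addFk]
  by_cases hd : delAll n ∈ π
  · obtain ⟨l₁, l₂, rfl⟩ := List.append_of_mem hd
    have key : ∀ s : Set (Fin (n + 1)),
        SeqApply (l₁ ++ delAll n :: l₂) s = SeqApply l₂ ∅ := by
      intro s
      rw [seqApply_append]
      have : (delAll n).apply (SeqApply l₁ s) = ∅ := by
        simp [PlanAct.apply, delAll]
      simp [SeqApply, this]
    have h₁ := (hrev (addFk n k).pre (Set.mem_univ _) subset_rfl).2
    have h₂ := (hrev Set.univ (Set.mem_univ _) (Set.subset_univ _)).2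
    have happ : ∀ s : Set (Fin (n + 1)),
        SeqApply (l₁ ++ delAll n :: l₂) ((addFk n k).apply s) = SeqApply l₂ ∅ :=
      fun s => key _
    rw [happ] at h₁ h₂
    rw [h₁] at h₂
    exact hknp (h₂ ▸ Set.mem_univ k)
  · have hdel : ∀ b ∈ π, b.del = ∅ := by
      intro b hb
      rcases hmem b hb with h | ⟨j, rfl⟩
      · exact absurd (h ▸ hb) hd
      · rfl
    have h₁ := (hrev (addFk n k).pre (Set.mem_univ _) subset_rfl).2
    have h₂ := seqApply_mono π hdel ((addFk n k).apply (addFk n k).pre)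
    rw [h₁] at h₂
    have : (addFk n k).apply (addFk n k).pre ⊆ (addFk n k).pre := h₂
    exact hknp (this (Or.inr rfl))
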